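/- arXiv:0708.1100 — 3 statements merged into one kernel-verified Lean document; each statement's English description precedes it below -/
import Mathlib

section
/- With the notation of the previous item, the assignment l ↦ ω(ℓ'(0), l) defines a quadratic (symmetric bilinear) form on Λ(0): if ℓ₁, ℓ₂ are smooth curves of vectors with ℓᵢ(t) ∈ Λ(t) and ℓᵢ(0) = lᵢ, then ω(ℓ₁'(0), l₂) = ω(ℓ₂'(0), l₁). -/
variable {W : Type*} [NormedAddCommGroup W] [NormedSpace ℝ W]

/-- the assignment `l ↦ ω(ℓ'(0), l)` defines a symmetric bilinear form on
`Λ(0)`: for smooth curves of vectors `ℓ₁, ℓ₂` with `ℓᵢ(t) ∈ Λ(t)`, one has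
`ω(ℓ₁'(0), ℓ₂(0)) = ω(ℓ₂'(0), ℓ₁(0))`. -/
theorem velocity_form_symmetric [FiniteDimensional ℝ W] (m : ℕ)
    (hW : Module.finrank ℝ W = 2 * m)
    (ω : W →ₗ[ℝ] W →ₗ[ℝ] ℝ)
    (halt : ∀ v, ω v v = 0)
    (hnd : ∀ v, (∀ w, ω v w = 0) → v = 0)
    (Λ : ℝ → Submodule ℝ W)
    (hLag : ∀ t, (∀ x ∈ Λ t, ∀ y ∈ Λ t, ω x y = 0) ∧ Module.finrank ℝ (Λ t) = m)
    (ℓ₁ ℓ₂ : ℝ → W)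
    (h₁ : ContDiff ℝ (⊤ : ℕ∞) ℓ₁) (h₂ : ContDiff ℝ (⊤ : ℕ∞) ℓ₂)
    (hmem₁ : ∀ t, ℓ₁ t ∈ Λ t) (hmem₂ : ∀ t, ℓ₂ t ∈ Λ t) :
    ω (deriv ℓ₁ 0) (ℓ₂ 0) = ω (deriv ℓ₂ 0) (ℓ₁ 0) := by
  -- upgrade ω to a continuous bilinear map
  let ω' : W →ₗ[ℝ] (W →L[ℝ] ℝ) :=
    { toFun := fun v => LinearMap.toContinuousLinearMap (ω v)
      map_add' := by intro a b; ext w; simp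
      map_smul' := by intro c a; ext w; simp }
  let B : W →L[ℝ] (W →L[ℝ] ℝ) := LinearMap.toContinuousLinearMap ω'
  have d₁ : HasDerivAt ℓ₁ (deriv ℓ₁ 0) 0 :=
    ((h₁.differentiable (by simp)) 0).hasDerivAt
  have d₂ : HasDerivAt ℓ₂ (deriv ℓ₂ 0) 0 :=
    ((h₂.differentiable (by simp)) 0).hasDerivAt
  have dB₁ : HasDerivAt (fun t => B (ℓ₁ t)) (B (deriv ℓ₁ 0)) 0 :=
    B.hasFDerivAt.comp_hasDerivAt 0 d₁
  have dF : HasDerivAt (fun t => B (ℓ₁ t) (ℓ₂ t))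
      (B (deriv ℓ₁ 0) (ℓ₂ 0) + B (ℓ₁ 0) (deriv ℓ₂ 0)) 0 := dB₁.clm_apply d₂
  have hzero : (fun t => B (ℓ₁ t) (ℓ₂ t)) = fun _ => (0 : ℝ) := by
    funext t
    exact (hLag t).1 _ (hmem₁ t) _ (hmem₂ t)
  rw [hzero] at dF
  have hsum : B (deriv ℓ₁ 0) (ℓ₂ 0) + B (ℓ₁ 0) (deriv ℓ₂ 0) = 0 := by
    simpa using dF.deriv.symm
  have hB : ∀ v w, B v w = ω v w := fun v w => rfl
  have hanti : ∀ v w, ω v w = - ω w v := by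
    intro v w
    have h := halt (v + w)
    simp [map_add, halt] at h
    linarith
  rw [hB, hB] at hsum
  rw [hanti (deriv ℓ₂ 0) (ℓ₁ 0)]
  linarith
end

section
/- Let Λ(t) be a smooth curve in the Grassmannian of k-dimensional subspaces of a vector space W, and let Λ^{(i)}(τ) denote its i-th extension: the span of all derivatives up to order i at τ of smooth curves of vectors ℓ(t) ∈ Λ(t). Assume the dimensions of Λ^{(i)}(t) are independent of t. Then for every i ≥ 1, dim Λ^{(i+1)} − dim Λ^{(i)} ≤ dim Λ^{(i)} − dim Λ^{(i−1)}, i.e., the increments of dimension of the extensions are nonincreasing. -/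
open scoped Matrix


variable {W : Type*} [NormedAddCommGroup W] [NormedSpace ℝ W]

/-- The `i`-th extension of a curve `Λ(·)` of subspaces at the point `τ`: the span of all
derivatives of order `≤ i` at `τ` of smooth curves of vectors `ℓ(t) ∈ Λ(t)`. -/
noncomputable def curveExt (Λ : ℝ → Submodule ℝ W) (i : ℕ) (τ : ℝ) : Submodule ℝ W :=
  Submodule.span ℝ
    {v | ∃ ℓ : ℝ → W, ContDiff ℝ (⊤ : ℕ∞) ℓ ∧ (∀ t, ℓ t ∈ Λ t) ∧ ∃ j ≤ i, iteratedDeriv j ℓ τ = v}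

lemma iteratedDeriv_add' {f g : ℝ → W} (hf : ContDiff ℝ (⊤ : ℕ∞) f) (hg : ContDiff ℝ (⊤ : ℕ∞) g) (n : ℕ) (x : ℝ) :
    iteratedDeriv n (f + g) x = iteratedDeriv n f x + iteratedDeriv n g x := by
  simp only [← iteratedDerivWithin_univ]
  exact iteratedDerivWithin_add (Set.mem_univ x) uniqueDiffOn_univ
    (hf.contDiffWithinAt.of_le (by exact_mod_cast (le_top : (n : ℕ∞) ≤ ⊤))) (hg.contDiffWithinAt.of_le (by exact_mod_cast (le_top : (n : ℕ∞) ≤ ⊤)))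

lemma iteratedDeriv_smul' {f : ℝ → W} (hf : ContDiff ℝ (⊤ : ℕ∞) f) (c : ℝ) (n : ℕ) (x : ℝ) :
    iteratedDeriv n (c • f) x = c • iteratedDeriv n f x := by
  simp only [← iteratedDerivWithin_univ]
  exact iteratedDerivWithin_const_smul (Set.mem_univ x) uniqueDiffOn_univ c
    (hf.contDiffWithinAt.of_le (by exact_mod_cast (le_top : (n : ℕ∞) ≤ ⊤)))

lemma curveExt_mono (Λ : ℝ → Submodule ℝ W) {i j : ℕ} (h : i ≤ j) (τ : ℝ) :
    curveExt Λ i τ ≤ curveExt Λ j τ := by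
  apply Submodule.span_mono
  rintro v ⟨ℓ, h1, h2, k, hk, rfl⟩
  exact ⟨ℓ, h1, h2, k, hk.trans h, rfl⟩

lemma mem_curveExt {Λ : ℝ → Submodule ℝ W} {ℓ : ℝ → W} (h1 : ContDiff ℝ (⊤ : ℕ∞) ℓ)
    (h2 : ∀ t, ℓ t ∈ Λ t) {j i : ℕ} (hj : j ≤ i) (τ : ℝ) :
    iteratedDeriv j ℓ τ ∈ curveExt Λ i τ :=
  Submodule.subset_span ⟨ℓ, h1, h2, j, hj, rfl⟩

def curveSpace (Λ : ℝ → Submodule ℝ W) : Submodule ℝ (ℝ → W) where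
  carrier := {ℓ | ContDiff ℝ (⊤ : ℕ∞) ℓ ∧ ∀ t, ℓ t ∈ Λ t}
  add_mem' := fun hf hg => ⟨hf.1.add hg.1, fun t => (Λ t).add_mem (hf.2 t) (hg.2 t)⟩
  zero_mem' := ⟨contDiff_const, fun t => (Λ t).zero_mem⟩
  smul_mem' := fun c f hf => ⟨hf.1.const_smul c, fun t => (Λ t).smul_mem c (hf.2 t)⟩

noncomputable def Dmap (Λ : ℝ → Submodule ℝ W) (j : ℕ) (τ : ℝ) : curveSpace Λ →ₗ[ℝ] W where
  toFun ℓ := iteratedDeriv j ℓ.1 τ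
  map_add' f g := iteratedDeriv_add' f.2.1 g.2.1 j τ
  map_smul' c f := iteratedDeriv_smul' f.2.1 c j τ

noncomputable def chiMap (Λ : ℝ → Submodule ℝ W) (j k : ℕ) (τ : ℝ) :
    curveSpace Λ →ₗ[ℝ]
      (curveExt Λ k τ ⧸ (Submodule.comap (curveExt Λ k τ).subtype (curveExt Λ j τ))) :=
  (Submodule.mkQ _).comp (LinearMap.codRestrict _ (Dmap Λ k τ)
    (fun ℓ => mem_curveExt ℓ.2.1 ℓ.2.2 le_rfl τ))

lemma chiMap_surjective (Λ : ℝ → Submodule ℝ W) (j : ℕ) (τ : ℝ) :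
    Function.Surjective (chiMap Λ j (j + 1) τ) := by
  have claim : ∀ v ∈ curveExt Λ (j+1) τ,
      ∃ ℓ : curveSpace Λ, Dmap Λ (j+1) τ ℓ - v ∈ curveExt Λ j τ := by
    intro v hv
    induction hv using Submodule.span_induction with
    | mem v hv =>
      obtain ⟨m, h1, h2, j', hj', rfl⟩ := hv
      rcases Nat.lt_or_ge j' (j+1) with h | h
      · refine ⟨0, ?_⟩
        have := Submodule.neg_mem _ (mem_curveExt (Λ := Λ) h1 h2 (Nat.lt_succ_iff.mp h) τ)
        simpa using this
      · refine ⟨⟨m, h1, h2⟩, ?_⟩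
        have hj : j' = j + 1 := le_antisymm hj' h
        subst hj
        simp [Dmap]
    | zero => exact ⟨0, by simp⟩
    | add x y hx hy ihx ihy =>
      obtain ⟨ℓ1, h1⟩ := ihx; obtain ⟨ℓ2, h2⟩ := ihy
      refine ⟨ℓ1 + ℓ2, ?_⟩
      have := Submodule.add_mem _ h1 h2
      simpa [map_add, add_sub_add_comm] using this
    | smul c x hx ihx =>
      obtain ⟨ℓ, h1⟩ := ihx
      refine ⟨c • ℓ, ?_⟩
      have := Submodule.smul_mem _ c h1
      simpa [map_smul, smul_sub] using this
  intro q
  obtain ⟨⟨v, hv⟩, rfl⟩ := Submodule.mkQ_surjective _ q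
  obtain ⟨ℓ, hℓ⟩ := claim v hv
  refine ⟨ℓ, ?_⟩
  rw [chiMap]
  simp only [LinearMap.comp_apply, Submodule.mkQ_apply]
  rw [Submodule.Quotient.eq]
  exact hℓ


lemma differentiableAt_det {ι : Type*} [Fintype ι] [DecidableEq ι]
    (N : ℝ → Matrix ι ι ℝ) {τ : ℝ} (h : ∀ p q, DifferentiableAt ℝ (fun t => N t p q) τ) :
    DifferentiableAt ℝ (fun t => (N t).det) τ := by
  simp only [Matrix.det_apply']
  exact DifferentiableAt.fun_sum fun σ _ =>
    DifferentiableAt.const_mul (DifferentiableAt.fun_finsetProd fun i _ => h _ _) _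

lemma differentiableAt_adjugate {ι : Type*} [Fintype ι] [DecidableEq ι]
    (N : ℝ → Matrix ι ι ℝ) {τ : ℝ} (h : ∀ p q, DifferentiableAt ℝ (fun t => N t p q) τ)
    (p q : ι) : DifferentiableAt ℝ (fun t => (N t).adjugate p q) τ := by
  simp only [Matrix.adjugate_apply]
  apply differentiableAt_det
  intro p' q'
  simp only [Matrix.updateRow_apply]
  by_cases hp : p' = q
  · simp [hp]
  · simp only [hp, if_false]
    exact h _ _

lemma key [FiniteDimensional ℝ W] (Λ : ℝ → Submodule ℝ W) (k : ℕ) (τ : ℝ)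
    (hconst : ∀ t, Module.finrank ℝ (curveExt Λ (k+1) t)
      = Module.finrank ℝ (curveExt Λ (k+1) τ))
    (ℓ : ℝ → W) (h1 : ContDiff ℝ (⊤ : ℕ∞) ℓ) (h2 : ∀ t, ℓ t ∈ Λ t)
    (h : iteratedDeriv (k+1) ℓ τ ∈ curveExt Λ k τ) :
    iteratedDeriv (k+2) ℓ τ ∈ curveExt Λ (k+1) τ := by
  classical
  set G : ℕ → Set W := fun i =>
    {v | ∃ m : ℝ → W, ContDiff ℝ (⊤ : ℕ∞) m ∧ (∀ t, m t ∈ Λ t) ∧ ∃ j ≤ i, iteratedDeriv j m τ = v}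
    with hG
  have hGspan : ∀ i, curveExt Λ i τ = Submodule.span ℝ (G i) := fun i => rfl
  have hGmono : G k ⊆ G (k+1) := by
    rintro v ⟨m, hm1, hm2, j, hj, rfl⟩
    exact ⟨m, hm1, hm2, j, hj.trans (Nat.le_succ k), rfl⟩
  obtain ⟨s, hsG, hsspan, hsind⟩ := exists_linearIndependent ℝ (G k)
  obtain ⟨b, hbG, hsb, hGsub, hbind⟩ :=
    exists_linearIndepOn_id_extension hsind (hsG.trans hGmono)
  have hbspan : Submodule.span ℝ b = curveExt Λ (k+1) τ := by
    refine le_antisymm (Submodule.span_le.2 (hbG.trans Submodule.subset_span)) ?_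
    rw [hGspan]
    exact Submodule.span_le.2 hGsub
  have hbfin : b.Finite := LinearIndependent.setFinite hbind
  haveI : Fintype ↥b := hbfin.fintype
  set BW := Module.Basis.extend hbind with hBW
  have hbe : b ⊆ hbind.extend (Set.subset_univ b) := hbind.subset_extend _
  set P : W →ₗ[ℝ] (↥b → ℝ) := LinearMap.pi (fun j : ↥b => BW.coord ⟨j.1, hbe j.2⟩) with hP
  have hPb : ∀ v j : ↥b, P v.1 j = if v = j then 1 else 0 := by
    intro v j
    have h1 : BW ⟨v.1, hbe v.2⟩ = v.1 := Module.Basis.extend_apply_self hbind _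
    have : P v.1 j = BW.repr v.1 ⟨j.1, hbe j.2⟩ := rfl
    rw [this, ← h1, Module.Basis.repr_self, Finsupp.single_apply]
    simp only [Subtype.mk.injEq]
    congr 1
    simp [Subtype.ext_iff]
  -- the curves
  have hcurves : ∀ v : ↥b, ∃ u : ℝ → W,
      (∀ t, DifferentiableAt ℝ u t) ∧ u τ = v.1 ∧ (∀ t, u t ∈ curveExt Λ (k+1) t) ∧
      (v.1 ∈ s → deriv u τ ∈ curveExt Λ (k+1) τ) := by
    rintro ⟨v, hv⟩
    by_cases hvs : v ∈ s
    · obtain ⟨m, hm1, hm2, j, hj, hval⟩ := hsG hvs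
      refine ⟨iteratedDeriv j m, ?_, hval, ?_, ?_⟩
      · exact fun t => (hm1.differentiable_iteratedDeriv j
          (lt_of_lt_of_le (by exact_mod_cast lt_top_iff_ne_top.2 (by simp)) (le_refl _))) t
      · exact fun t => mem_curveExt hm1 hm2 (hj.trans (Nat.le_succ k)) t
      · intro _
        have : deriv (iteratedDeriv j m) τ = iteratedDeriv (j+1) m τ := by
          rw [iteratedDeriv_succ]
        rw [this]
        exact mem_curveExt hm1 hm2 (by omega) τ
    · obtain ⟨m, hm1, hm2, j, hj, hval⟩ := hbG hv
      refine ⟨iteratedDeriv j m, ?_, hval, ?_, fun hvs' => absurd hvs' hvs⟩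
      · exact fun t => (hm1.differentiable_iteratedDeriv j
          (lt_of_lt_of_le (by exact_mod_cast lt_top_iff_ne_top.2 (by simp)) (le_refl _))) t
      · exact fun t => mem_curveExt hm1 hm2 hj t
  choose u hud huτ hum hus using hcurves
  set y : ℝ → W := iteratedDeriv (k+1) ℓ with hy
  have hyd : ∀ t, DifferentiableAt ℝ y t := fun t =>
    (h1.differentiable_iteratedDeriv (k+1)
      (lt_of_lt_of_le (by exact_mod_cast lt_top_iff_ne_top.2 (by simp)) (le_refl _))) t
  have hymem : ∀ t, y t ∈ curveExt Λ (k+1) t := fun t => mem_curveExt h1 h2 le_rfl t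
  set Pc : W →L[ℝ] (↥b → ℝ) := LinearMap.toContinuousLinearMap P with hPc
  have hPcP : ∀ w, Pc w = P w := fun w => rfl
  set M : ℝ → Matrix ↥b ↥b ℝ := fun t => Matrix.of fun p q : ↥b => P (u q t) p with hM
  have hMdiff : ∀ (t₀ : ℝ) (p q : ↥b), DifferentiableAt ℝ (fun t => M t p q) t₀ := by
    intro t₀ p q
    have : DifferentiableAt ℝ (fun t => Pc (u q t)) t₀ :=
      Pc.differentiableAt.comp t₀ (hud q t₀)
    exact (differentiableAt_pi.1 this) p
  have hPydiff : ∀ q : ↥b, DifferentiableAt ℝ (fun t => P (y t) q) τ := by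
    intro q
    have : DifferentiableAt ℝ (fun t => Pc (y t)) τ := Pc.differentiableAt.comp τ (hyd τ)
    exact (differentiableAt_pi.1 this) q
  have hMτ : M τ = 1 := by
    ext p q
    rw [hM]
    simp only [Matrix.of_apply]
    rw [huτ q, hPb q p, Matrix.one_apply]
    by_cases h : p = q <;> simp [h, eq_comm]
  have hdetdiff : DifferentiableAt ℝ (fun t => (M t).det) τ := differentiableAt_det M (hMdiff τ)
  have hdetcont : Continuous fun t => (M t).det :=
    Continuous.matrix_det (continuous_matrix fun p q =>
      Differentiable.continuous (fun t => hMdiff t p q))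
  have hdetne : ∀ᶠ t in nhds τ, (M t).det ≠ 0 := by
    have h0 : {x : ℝ | x ≠ 0} ∈ nhds ((M τ).det) := by
      rw [hMτ, Matrix.det_one]
      exact isOpen_compl_singleton.mem_nhds (by norm_num)
    exact hdetcont.continuousAt.preimage_mem_nhds h0
  -- P applied to combinations
  have hMg : ∀ (t : ℝ) (g : ↥b → ℝ), P (∑ j : ↥b, g j • u j t) = M t *ᵥ g := by
    intro t g
    funext p
    have : P (∑ j : ↥b, g j • u j t) p = ∑ j : ↥b, g j * P (u j t) p := by
      rw [map_sum]
      simp only [map_smul]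
      simp [Finset.sum_apply]
    rw [this]
    simp only [Matrix.mulVec, dotProduct, hM, Matrix.of_apply]
    exact Finset.sum_congr rfl fun j _ => mul_comm _ _
  -- independence and spanning near τ
  have hcard : Fintype.card ↥b = Module.finrank ℝ (curveExt Λ (k+1) τ) := by
    rw [← hbspan, ← Set.toFinset_card]
    exact (finrank_span_set_eq_card hbind).symm
  have hspan : ∀ t : ℝ, (M t).det ≠ 0 →
      curveExt Λ (k+1) t = Submodule.span ℝ (Set.range fun j : ↥b => u j t) := by
    intro t hdt
    have hiu : IsUnit (M t).det := isUnit_iff_ne_zero.mpr hdt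
    have hind : LinearIndependent ℝ (fun j : ↥b => u j t) := by
      rw [Fintype.linearIndependent_iff]
      intro g hg
      have hMv : M t *ᵥ g = 0 := by rw [← hMg t g, hg, map_zero]
      have : g = 0 := by
        have := congrArg (fun v => (M t)⁻¹ *ᵥ v) hMv
        simpa [Matrix.mulVec_mulVec, Matrix.nonsing_inv_mul (M t) hiu] using this
      exact fun i => congrFun this i
    have hle : Submodule.span ℝ (Set.range fun j : ↥b => u j t) ≤ curveExt Λ (k+1) t := by
      rw [Submodule.span_le]
      rintro _ ⟨j, rfl⟩
      exact hum j t
    refine (Submodule.eq_of_le_of_finrank_eq hle ?_).symm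
    rw [finrank_span_eq_card hind, hconst t, ← hcard]
  set a : ℝ → ↥b → ℝ := fun t => (M t)⁻¹ *ᵥ P (y t) with ha
  have hrep : ∀ᶠ t in nhds τ, y t = ∑ j : ↥b, a t j • u j t := by
    filter_upwards [hdetne] with t hdt
    have hiu : IsUnit (M t).det := isUnit_iff_ne_zero.mpr hdt
    have hmem : y t ∈ Submodule.span ℝ (Set.range fun j : ↥b => u j t) := by
      rw [← hspan t hdt]; exact hymem t
    obtain ⟨c, hc⟩ := (Submodule.mem_span_range_iff_exists_fun ℝ).mp hmem
    have hPy : M t *ᵥ c = P (y t) := by rw [← hMg t c, hc]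
    have hac : a t = c := by
      rw [ha]
      simp only
      rw [← hPy, Matrix.mulVec_mulVec, Matrix.nonsing_inv_mul (M t) hiu, Matrix.one_mulVec]
    rw [hac, hc]
  have haτ : a τ = P (y τ) := by
    rw [ha]; simp only [hMτ, inv_one, Matrix.one_mulVec]
  have hPy0 : ∀ j : ↥b, j.1 ∉ s → P (y τ) j = 0 := by
    intro j hjs
    have hyC : y τ ∈ Submodule.span ℝ s := by rw [hsspan, ← hGspan]; exact h
    have : Submodule.span ℝ s ≤ LinearMap.ker ((LinearMap.proj j).comp P) := by
      rw [Submodule.span_le]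
      intro w hws
      have hwb : w ∈ b := hsb hws
      have := hPb ⟨w, hwb⟩ j
      have hne : (⟨w, hwb⟩ : ↥b) ≠ j := by
        intro heq
        exact hjs (by rw [← congrArg Subtype.val heq]; exact hws)
      simp only [hne, if_false] at this
      simpa [LinearMap.mem_ker] using this
    have := this hyC
    simpa [LinearMap.mem_ker] using this
  have hadiff : ∀ j : ↥b, DifferentiableAt ℝ (fun t => a t j) τ := by
    intro j
    have hform : (fun t => a t j)
        = fun t => ((M t).det)⁻¹ * ((M t).adjugate *ᵥ P (y t)) j := by
      funext t
      rw [ha]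
      simp only [Matrix.inv_def, Matrix.smul_mulVec, Pi.smul_apply, smul_eq_mul,
        Ring.inverse_eq_inv']
    rw [hform]
    apply DifferentiableAt.mul
    · exact hdetdiff.inv (by rw [hMτ, Matrix.det_one]; norm_num)
    · simp only [Matrix.mulVec, dotProduct]
      exact DifferentiableAt.fun_sum fun q _ =>
        (differentiableAt_adjugate M (hMdiff τ) j q).mul (hPydiff q)
  -- differentiate
  have hder : HasDerivAt (fun t => ∑ j : ↥b, a t j • u j t)
      (∑ j : ↥b, (a τ j • deriv (u j) τ + deriv (fun t => a t j) τ • u j τ)) τ := by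
    apply HasDerivAt.fun_sum
    intro j _
    exact ((hadiff j).hasDerivAt).smul ((hud j τ).hasDerivAt)
  have hfinal : iteratedDeriv (k+2) ℓ τ
      = ∑ j : ↥b, (a τ j • deriv (u j) τ + deriv (fun t => a t j) τ • u j τ) := by
    have e1 : iteratedDeriv (k+2) ℓ τ = deriv y τ := by
      rw [hy, show k+2 = (k+1)+1 from rfl, iteratedDeriv_succ]
    rw [e1, Filter.EventuallyEq.deriv_eq hrep]
    exact hder.deriv
  rw [hfinal]
  apply Submodule.sum_mem
  intro j _
  apply Submodule.add_mem
  · by_cases hjs : j.1 ∈ s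
    · exact Submodule.smul_mem _ _ (hus j hjs)
    · rw [show a τ j = 0 from by rw [haτ]; exact hPy0 j hjs, zero_smul]
      exact Submodule.zero_mem _
  · apply Submodule.smul_mem
    rw [huτ j, hGspan]
    exact Submodule.subset_span (hbG j.2)

/-- if the dimensions of all extensions `Λ^{(i)}(t)` are independent of `t`,
then the increments of dimension of the extensions are nonincreasing:
`dim Λ^{(i+1)} − dim Λ^{(i)} ≤ dim Λ^{(i)} − dim Λ^{(i−1)}` for `i ≥ 1`. -/
theorem ext_dim_increments_nonincreasing [FiniteDimensional ℝ W]
    (Λ : ℝ → Submodule ℝ W)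
    (hconst : ∀ i : ℕ, ∃ d : ℕ, ∀ t : ℝ, Module.finrank ℝ (curveExt Λ i t) = d)
    (i : ℕ) (hi : 1 ≤ i) (τ : ℝ) :
    Module.finrank ℝ (curveExt Λ (i + 1) τ) - Module.finrank ℝ (curveExt Λ i τ) ≤
      Module.finrank ℝ (curveExt Λ i τ) - Module.finrank ℝ (curveExt Λ (i - 1) τ) := by
  obtain ⟨k, rfl⟩ : ∃ k, i = k + 1 := ⟨i - 1, by omega⟩
  simp only [Nat.succ_sub_one]
  set χ := chiMap Λ k (k + 1) τ with hχdef
  set ψ := chiMap Λ (k + 1) (k + 1 + 1) τ with hψdef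
  have hχ : Function.Surjective χ := chiMap_surjective Λ k τ
  have hψ : Function.Surjective ψ := chiMap_surjective Λ (k + 1) τ
  have hker : LinearMap.ker χ ≤ LinearMap.ker ψ := by
    intro ℓ hℓ
    have hmem : Dmap Λ (k+1) τ ℓ ∈ curveExt Λ k τ := by
      have := hℓ
      simp only [hχdef, LinearMap.mem_ker, chiMap, LinearMap.comp_apply,
        Submodule.mkQ_apply, Submodule.Quotient.mk_eq_zero, Submodule.mem_comap] at this
      exact this
    have hkey : iteratedDeriv (k+2) ℓ.1 τ ∈ curveExt Λ (k+1) τ := by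
      obtain ⟨d, hd⟩ := hconst (k+1)
      refine key Λ k τ (fun t => by rw [hd t, hd τ]) ℓ.1 ℓ.2.1 ℓ.2.2 ?_
      exact hmem
    simp only [hψdef, LinearMap.mem_ker, chiMap, LinearMap.comp_apply,
      Submodule.mkQ_apply, Submodule.Quotient.mk_eq_zero, Submodule.mem_comap]
    simpa [Dmap] using hkey
  have e := χ.quotKerEquivOfSurjective hχ
  let f := (LinearMap.ker χ).liftQ ψ hker ∘ₗ (e.symm.toLinearMap)
  have hf : Function.Surjective f := by
    intro y
    obtain ⟨x, rfl⟩ := hψ y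
    refine ⟨e (Submodule.Quotient.mk x), ?_⟩
    show ((LinearMap.ker χ).liftQ ψ hker) (e.symm (e (Submodule.Quotient.mk x))) = ψ x
    rw [e.symm_apply_apply, Submodule.liftQ_apply]
  have hle : Module.finrank ℝ
        (curveExt Λ (k+1+1) τ ⧸ (Submodule.comap (curveExt Λ (k+1+1) τ).subtype
          (curveExt Λ (k+1) τ)))
      ≤ Module.finrank ℝ
        (curveExt Λ (k+1) τ ⧸ (Submodule.comap (curveExt Λ (k+1) τ).subtype
          (curveExt Λ k τ))) := by
    calc Module.finrank ℝ _ = Module.finrank ℝ (LinearMap.range f) := by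
          rw [LinearMap.range_eq_top.mpr hf, finrank_top]
      _ ≤ _ := LinearMap.finrank_range_le f
  have e1 := Submodule.finrank_quotient_add_finrank
    (Submodule.comap (curveExt Λ (k+1) τ).subtype (curveExt Λ k τ))
  have e2 := Submodule.finrank_quotient_add_finrank
    (Submodule.comap (curveExt Λ (k+1+1) τ).subtype (curveExt Λ (k+1) τ))
  have e3 : Module.finrank ℝ
      (Submodule.comap (curveExt Λ (k+1) τ).subtype (curveExt Λ k τ))
      = Module.finrank ℝ (curveExt Λ k τ) :=
    (Submodule.comapSubtypeEquivOfLe (curveExt_mono Λ (Nat.le_succ k) τ)).finrank_eq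
  have e4 : Module.finrank ℝ
      (Submodule.comap (curveExt Λ (k+1+1) τ).subtype (curveExt Λ (k+1) τ))
      = Module.finrank ℝ (curveExt Λ (k+1) τ) :=
    (Submodule.comapSubtypeEquivOfLe (curveExt_mono Λ (Nat.le_succ (k+1)) τ)).finrank_eq
  omega
end

section
/- Let E : ℝ → W^r be a smooth curve of r-tuples of vectors in a symplectic vector space (W, ω) and suppose the r×r matrix Ω(t) with entries Ω(t)ᵢⱼ = ω(Eᵢ^{(p)}(t), Eⱼ^{(p−1)}(t)) equals the identity for all t, and that ω(Eᵢ^{(j)}(t), Eₖ^{(s)}(t)) = 0 whenever j + s ≤ 2p − 2. If Ẽ(t) = E(t)U(t) for a smooth curve of orthogonal matrices U(t), then the antisymmetry defect satisfies: the matrix with entries ω(Ẽᵢ^{(p)}(t), Ẽⱼ^{(p)}(t)) equals U(t)ᵀ (2p U'(t) + A(t) U(t)) where A(t)ᵢⱼ = ω(Eᵢ^{(p)}(t), Eⱼ^{(p)}(t)); consequently the tuple Ẽ spans isotropic p-th derivative subspaces (the matrix vanishes) if and only if U solves 2p U' + A U = 0. -/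
open Matrix

variable {W : Type*} [NormedAddCommGroup W] [NormedSpace ℝ W]

private lemma smooth_iteratedDeriv' (f : ℝ → W) (h : ContDiff ℝ (⊤ : ℕ∞) f) (n : ℕ) :
    ContDiff ℝ (↑(⊤:ℕ∞)) (iteratedDeriv n f) := by
  rw [iteratedDeriv_eq_iterate]
  exact ContDiff.iterate_deriv n (h.of_le (by simp))

private lemma diff_iteratedDeriv' (f : ℝ → W) (h : ContDiff ℝ (⊤ : ℕ∞) f) (n : ℕ) (t : ℝ) :
    DifferentiableAt ℝ (iteratedDeriv n f) t :=
  ((smooth_iteratedDeriv' f h n).differentiable (by simp)).differentiableAt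

private lemma hasDerivAt_iteratedDeriv' (f : ℝ → W) (h : ContDiff ℝ (⊤ : ℕ∞) f) (n : ℕ) (t : ℝ) :
    HasDerivAt (iteratedDeriv n f) (iteratedDeriv (n+1) f t) t := by
  rw [iteratedDeriv_succ]
  exact (diff_iteratedDeriv' f h n t).hasDerivAt

open Finset in
private lemma leibniz_smul' (f : ℝ → ℝ) (g : ℝ → W) (hf : ContDiff ℝ (⊤ : ℕ∞) f) (hg : ContDiff ℝ (⊤ : ℕ∞) g) :
    ∀ (n : ℕ) (t : ℝ), iteratedDeriv n (fun s => f s • g s) t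
      = ∑ m ∈ Finset.range (n + 1),
          (n.choose m : ℝ) • iteratedDeriv m f t • iteratedDeriv (n - m) g t := by
  intro n
  induction n with
  | zero => intro t; simp [iteratedDeriv_zero]
  | succ n ih =>
    intro t
    have hfun : iteratedDeriv n (fun s => f s • g s) = fun t =>
        ∑ m ∈ Finset.range (n + 1),
          (n.choose m : ℝ) • iteratedDeriv m f t • iteratedDeriv (n - m) g t := funext ih
    rw [iteratedDeriv_succ, hfun]
    have hder : ∀ m, HasDerivAt
        (fun t => (n.choose m : ℝ) • iteratedDeriv m f t • iteratedDeriv (n - m) g t)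
        ((n.choose m : ℝ) •
          (iteratedDeriv m f t • iteratedDeriv (n - m + 1) g t
            + iteratedDeriv (m + 1) f t • iteratedDeriv (n - m) g t)) t := by
      intro m
      exact (((hasDerivAt_iteratedDeriv' f hf m t).smul
        (hasDerivAt_iteratedDeriv' g hg (n - m) t))).const_smul _
    have hsum : HasDerivAt (fun t => ∑ m ∈ range (n + 1),
          (n.choose m : ℝ) • iteratedDeriv m f t • iteratedDeriv (n - m) g t)
        (∑ m ∈ range (n + 1), (n.choose m : ℝ) •
          (iteratedDeriv m f t • iteratedDeriv (n - m + 1) g t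
            + iteratedDeriv (m + 1) f t • iteratedDeriv (n - m) g t)) t :=
      HasDerivAt.fun_sum (fun m _ => hder m)
    rw [hsum.deriv]
    have split : ∑ m ∈ range (n + 1), (n.choose m : ℝ) •
          (iteratedDeriv m f t • iteratedDeriv (n - m + 1) g t
            + iteratedDeriv (m + 1) f t • iteratedDeriv (n - m) g t)
        = (∑ m ∈ range (n + 1), (n.choose m : ℝ) •
            iteratedDeriv m f t • iteratedDeriv (n + 1 - m) g t)
          + ∑ m ∈ range (n + 1), (n.choose m : ℝ) •
            iteratedDeriv (m + 1) f t • iteratedDeriv (n - m) g t := by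
      rw [← Finset.sum_add_distrib]
      refine Finset.sum_congr rfl fun m hm => ?_
      have hmn : m ≤ n := Nat.lt_succ_iff.mp (Finset.mem_range.mp hm)
      rw [smul_add, Nat.sub_add_comm hmn]
    rw [split]
    rw [Finset.sum_range_succ' (fun m => ((n+1).choose m : ℝ) •
          iteratedDeriv m f t • iteratedDeriv (n + 1 - m) g t)]
    rw [Finset.sum_range_succ' (fun m => (n.choose m : ℝ) •
          iteratedDeriv m f t • iteratedDeriv (n + 1 - m) g t)]
    have ext : ∑ m ∈ range n, (n.choose (m+1) : ℝ) •
            iteratedDeriv (m+1) f t • iteratedDeriv (n + 1 - (m+1)) g t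
        = ∑ m ∈ range (n+1), (n.choose (m+1) : ℝ) •
            iteratedDeriv (m+1) f t • iteratedDeriv (n - m) g t := by
      rw [Finset.sum_range_succ]
      simp [Nat.choose_succ_self]
    rw [ext, add_right_comm, ← Finset.sum_add_distrib]
    simp only [Nat.choose_zero_right]
    congr 1
    refine Finset.sum_congr rfl fun m _ => ?_
    have hcast : (((n+1)).choose (m+1) : ℝ) = (n.choose (m+1) : ℝ) + (n.choose m : ℝ) := by
      rw [Nat.choose_succ_succ]; push_cast; ring
    rw [Nat.succ_sub_succ, hcast, add_smul]

private lemma iteratedDeriv_fin_sum' {ι : Type*} (s : Finset ι) (F : ι → ℝ → W)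
    (hF : ∀ k, ContDiff ℝ (⊤ : ℕ∞) (F k)) (n : ℕ) (t : ℝ) :
    iteratedDeriv n (fun u => ∑ k ∈ s, F k u) t = ∑ k ∈ s, iteratedDeriv n (F k) t := by
  simp only [iteratedDeriv_eq_iteratedFDeriv]
  rw [iteratedFDeriv_sum (fun k _ => (hF k).of_le (by exact_mod_cast le_top))]
  simp

private lemma hasDerivAt_bilin' [FiniteDimensional ℝ W] (ω : W →ₗ[ℝ] W →ₗ[ℝ] ℝ)
    {u v : ℝ → W} {u' v' : W} {t : ℝ}
    (hu : HasDerivAt u u' t) (hv : HasDerivAt v v' t) :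
    HasDerivAt (fun s => ω (u s) (v s)) (ω u' (v t) + ω (u t) v') t := by
  let L : W →ₗ[ℝ] (W →L[ℝ] ℝ) :=
    { toFun := fun w => LinearMap.toContinuousLinearMap (ω w)
      map_add' := by intro x y; ext z; simp
      map_smul' := by intro c x; ext z; simp }
  let B : W →L[ℝ] (W →L[ℝ] ℝ) := LinearMap.toContinuousLinearMap L
  have hB : HasDerivAt (fun s => B (u s)) (B u') t :=
    B.hasFDerivAt.comp_hasDerivAt t hu
  have := hB.clm_apply hv
  simpa [B, L] using this

/-- let `E(t)` be a smooth curve of `r`-tuples of vectors with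
`ω(Eᵢ^{(p)}, Eⱼ^{(p−1)}) = δᵢⱼ` and all pairings of total order `≤ 2p − 2` vanishing.
If `Ẽ(t) = E(t)U(t)` for a smooth curve of orthogonal matrices `U(t)`, then the matrix
`(ω(Ẽᵢ^{(p)}, Ẽⱼ^{(p)}))ᵢⱼ` equals `Uᵀ(2p U' + A U)`, where `A = (ω(Eᵢ^{(p)}, Eⱼ^{(p)}))`;
consequently it vanishes identically iff `U` solves `2p U' + A U = 0`. -/
theorem frame_rotation_isotropy [FiniteDimensional ℝ W]
    (ω : W →ₗ[ℝ] W →ₗ[ℝ] ℝ)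
    (halt : ∀ v, ω v v = 0)
    (r p : ℕ) (hp : 0 < p)
    (E : ℝ → Fin r → W)
    (hE : ∀ i, ContDiff ℝ (⊤ : ℕ∞) fun t => E t i)
    (hid : ∀ (t : ℝ) (i j : Fin r),
      ω (iteratedDeriv p (fun s => E s i) t) (iteratedDeriv (p - 1) (fun s => E s j) t) =
        if i = j then (1 : ℝ) else 0)
    (hzero : ∀ (t : ℝ) (i k : Fin r) (j s : ℕ), j + s ≤ 2 * p - 2 →
      ω (iteratedDeriv j (fun u => E u i) t) (iteratedDeriv s (fun u => E u k) t) = 0)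
    (U : ℝ → Matrix (Fin r) (Fin r) ℝ)
    (hUsmooth : ∀ i j, ContDiff ℝ (⊤ : ℕ∞) fun t => U t i j)
    (hUorth : ∀ t, U t ∈ Matrix.orthogonalGroup (Fin r) ℝ) :
    (∀ (t : ℝ) (i j : Fin r),
      ω (iteratedDeriv p (fun s => ∑ k, U s k i • E s k) t)
          (iteratedDeriv p (fun s => ∑ k, U s k j • E s k) t) =
        ((U t)ᵀ *
          ((2 * (p : ℝ)) • (Matrix.of fun a b => deriv (fun s => U s a b) t) +
            (Matrix.of fun a b =>
              ω (iteratedDeriv p (fun s => E s a) t) (iteratedDeriv p (fun s => E s b) t)) *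
              U t)) i j) ∧
    ((∀ (t : ℝ) (i j : Fin r),
        ω (iteratedDeriv p (fun s => ∑ k, U s k i • E s k) t)
          (iteratedDeriv p (fun s => ∑ k, U s k j • E s k) t) = 0) ↔
      (∀ t : ℝ,
        (2 * (p : ℝ)) • (Matrix.of fun a b => deriv (fun s => U s a b) t) +
          (Matrix.of fun a b =>
            ω (iteratedDeriv p (fun s => E s a) t) (iteratedDeriv p (fun s => E s b) t)) *
            U t = 0)) := by
  -- swapped normalization identity
  have hswap : ∀ (t : ℝ) (i j : Fin r),
      ω (iteratedDeriv (p-1) (fun s => E s i) t) (iteratedDeriv p (fun s => E s j) t) =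
        -(if i = j then (1:ℝ) else 0) := by
    intro t i j
    have hzero' : (fun t' => ω (iteratedDeriv (p-1) (fun s => E s i) t')
        (iteratedDeriv (p-1) (fun s => E s j) t')) = fun _ => (0:ℝ) := by
      funext s
      exact hzero s i j (p-1) (p-1) (by omega)
    have hd : HasDerivAt (fun t' => ω (iteratedDeriv (p-1) (fun s => E s i) t')
          (iteratedDeriv (p-1) (fun s => E s j) t'))
        (ω (iteratedDeriv (p-1+1) (fun s => E s i) t) (iteratedDeriv (p-1) (fun s => E s j) t)
          + ω (iteratedDeriv (p-1) (fun s => E s i) t)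
              (iteratedDeriv (p-1+1) (fun s => E s j) t)) t :=
      hasDerivAt_bilin' ω (hasDerivAt_iteratedDeriv' _ (hE i) _ t)
        (hasDerivAt_iteratedDeriv' _ (hE j) _ t)
    have h0 : HasDerivAt (fun t' => ω (iteratedDeriv (p-1) (fun s => E s i) t')
        (iteratedDeriv (p-1) (fun s => E s j) t')) 0 t := by
      rw [hzero']; exact hasDerivAt_const t 0
    have huniq := hd.unique h0
    rw [show p - 1 + 1 = p from by omega] at huniq
    rw [hid t i j] at huniq
    linarith
  have main : ∀ (t : ℝ) (i j : Fin r),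
      ω (iteratedDeriv p (fun s => ∑ k, U s k i • E s k) t)
          (iteratedDeriv p (fun s => ∑ k, U s k j • E s k) t) =
        ((U t)ᵀ *
          ((2 * (p : ℝ)) • (Matrix.of fun a b => deriv (fun s => U s a b) t) +
            (Matrix.of fun a b =>
              ω (iteratedDeriv p (fun s => E s a) t) (iteratedDeriv p (fun s => E s b) t)) *
              U t)) i j := by
    intro t i j
    -- derivative of the orthogonality relation
    have horth : ∀ a b : Fin r, ∑ k, (deriv (fun s => U s k a) t * U t k b
        + U t k a * deriv (fun s => U s k b) t) = 0 := by
      intro a b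
      have hconst : (fun s => ∑ k, U s k a * U s k b)
          = fun _ => if a = b then (1:ℝ) else 0 := by
        funext s
        have h1 := hUorth s
        rw [Matrix.mem_orthogonalGroup_iff'] at h1
        have h2 := congrFun (congrFun h1 a) b
        simpa [Matrix.mul_apply, Matrix.one_apply, Matrix.star_eq_conjTranspose,
          Matrix.conjTranspose_apply] using h2
      have hd : HasDerivAt (fun s => ∑ k, U s k a * U s k b)
          (∑ k, (deriv (fun s => U s k a) t * U t k b
            + U t k a * deriv (fun s => U s k b) t)) t := by
        refine HasDerivAt.fun_sum fun k _ => ?_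
        exact (((hUsmooth k a).differentiable
              (by simp)).differentiableAt.hasDerivAt).mul
          (((hUsmooth k b).differentiable
              (by simp)).differentiableAt.hasDerivAt)
      have h0 : HasDerivAt (fun s => ∑ k, U s k a * U s k b) 0 t := by
        rw [hconst]; exact hasDerivAt_const t _
      exact hd.unique h0
    have horth' : ∑ k, deriv (fun s => U s k i) t * U t k j
        = -∑ k, U t k i * deriv (fun s => U s k j) t := by
      have h1 := horth i j
      rw [Finset.sum_add_distrib] at h1
      linarith
    -- Leibniz expansion
    have hexp : ∀ a : Fin r, iteratedDeriv p (fun s => ∑ k, U s k a • E s k) t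
        = ∑ k, ∑ m ∈ Finset.range (p+1), (p.choose m : ℝ) •
            iteratedDeriv m (fun s => U s k a) t • iteratedDeriv (p-m) (fun s => E s k) t := by
      intro a
      rw [iteratedDeriv_fin_sum' Finset.univ (fun k s => U s k a • E s k)
        (fun k => (hUsmooth k a).smul (hE k)) p t]
      exact Finset.sum_congr rfl fun k _ => leibniz_smul' _ _ (hUsmooth k a) (hE k) p t
    rw [hexp i, hexp j]
    have expand : ω (∑ k, ∑ m ∈ Finset.range (p+1), (p.choose m : ℝ) •
            iteratedDeriv m (fun s => U s k i) t • iteratedDeriv (p-m) (fun s => E s k) t)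
        (∑ l, ∑ n ∈ Finset.range (p+1), (p.choose n : ℝ) •
            iteratedDeriv n (fun s => U s l j) t • iteratedDeriv (p-n) (fun s => E s l) t)
      = ∑ k, ∑ l, ∑ m ∈ Finset.range (p+1), ∑ n ∈ Finset.range (p+1),
          ((p.choose m : ℝ) * (p.choose n) * iteratedDeriv m (fun s => U s k i) t
            * iteratedDeriv n (fun s => U s l j) t)
          * ω (iteratedDeriv (p-m) (fun s => E s k) t)
              (iteratedDeriv (p-n) (fun s => E s l) t) := by
      have bilin_sum : ∀ {ι κ : Type} (s : Finset ι) (tt : Finset κ) (u : ι → W) (v : κ → W),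
          ω (∑ a ∈ s, u a) (∑ b ∈ tt, v b) = ∑ a ∈ s, ∑ b ∈ tt, ω (u a) (v b) := by
        intro ι κ s tt u v
        rw [map_sum ω u s, LinearMap.sum_apply]
        exact Finset.sum_congr rfl fun a _ => map_sum (ω (u a)) v tt
      rw [bilin_sum]
      refine Finset.sum_congr rfl fun k _ => Finset.sum_congr rfl fun l _ => ?_
      rw [bilin_sum]
      refine Finset.sum_congr rfl fun m _ => Finset.sum_congr rfl fun n _ => ?_
      simp only [_root_.map_smul, LinearMap.smul_apply, smul_eq_mul]
      ring
    rw [expand]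
    have key : ∀ k l : Fin r,
        (∑ m ∈ Finset.range (p+1), ∑ n ∈ Finset.range (p+1),
          ((p.choose m : ℝ) * (p.choose n) * iteratedDeriv m (fun s => U s k i) t
            * iteratedDeriv n (fun s => U s l j) t)
          * ω (iteratedDeriv (p-m) (fun s => E s k) t)
              (iteratedDeriv (p-n) (fun s => E s l) t))
        = U t k i * U t l j
            * ω (iteratedDeriv p (fun s => E s k) t) (iteratedDeriv p (fun s => E s l) t)
          + (p:ℝ) * (U t k i * deriv (fun s => U s l j) t) * (if k = l then 1 else 0)
          - (p:ℝ) * (deriv (fun s => U s k i) t * U t l j) * (if k = l then 1 else 0) := by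
      intro k l
      rw [← Finset.sum_product']
      have hsub : ({(0,0),(0,1),(1,0)} : Finset (ℕ×ℕ))
          ⊆ Finset.range (p+1) ×ˢ Finset.range (p+1) := by
        intro q hq
        simp only [Finset.mem_insert, Finset.mem_singleton] at hq
        rcases hq with rfl|rfl|rfl <;>
          · simp only [Finset.mem_product, Finset.mem_range]
            omega
      rw [← Finset.sum_subset hsub ?_]
      · rw [show ({(0,0),(0,1),(1,0)} : Finset (ℕ×ℕ))
            = insert (0,0) (insert (0,1) {(1,0)}) from rfl]
        rw [Finset.sum_insert (by decide), Finset.sum_insert (by decide),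
          Finset.sum_singleton]
        simp only [Nat.choose_zero_right, Nat.choose_one_right, Nat.cast_one,
          iteratedDeriv_zero, iteratedDeriv_one, Nat.sub_zero]
        rw [hid t k l, hswap t k l]
        ring
      · intro q hq hnq
        simp only [Finset.mem_product, Finset.mem_range] at hq
        simp only [Finset.mem_insert, Finset.mem_singleton, Prod.ext_iff] at hnq
        push_neg at hnq
        have h2 : 2 ≤ q.1 + q.2 := by
          obtain ⟨m, n⟩ := q
          simp only at hnq ⊢
          omega
        rw [hzero t k l (p - q.1) (p - q.2) (by omega), mul_zero]
    rw [Finset.sum_congr rfl fun k _ => Finset.sum_congr rfl fun l _ => key k l]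
    -- collapse the Kronecker deltas and finish
    simp only [Matrix.mul_apply, Matrix.transpose_apply, Matrix.add_apply,
      Matrix.smul_apply, Matrix.of_apply, smul_eq_mul]
    have collapse : ∀ k : Fin r,
        (∑ l, (U t k i * U t l j
            * ω (iteratedDeriv p (fun s => E s k) t) (iteratedDeriv p (fun s => E s l) t)
          + (p:ℝ) * (U t k i * deriv (fun s => U s l j) t) * (if k = l then 1 else 0)
          - (p:ℝ) * (deriv (fun s => U s k i) t * U t l j) * (if k = l then 1 else 0)))
        = (∑ l, U t k i * U t l j
            * ω (iteratedDeriv p (fun s => E s k) t) (iteratedDeriv p (fun s => E s l) t))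
          + (p:ℝ) * (U t k i * deriv (fun s => U s k j) t)
          - (p:ℝ) * (deriv (fun s => U s k i) t * U t k j) := by
      intro k
      rw [Finset.sum_sub_distrib, Finset.sum_add_distrib]
      congr 1
      · congr 1
        simp [mul_ite, mul_one, mul_zero, Finset.sum_ite_eq]
      · simp [mul_ite, mul_one, mul_zero, Finset.sum_ite_eq]
    rw [Finset.sum_congr rfl fun k _ => collapse k]
    rw [Finset.sum_sub_distrib, Finset.sum_add_distrib, ← Finset.mul_sum, ← Finset.mul_sum]
    have hR : ∑ k, U t k i * (2*(p:ℝ) * deriv (fun s => U s k j) t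
          + ∑ l, ω (iteratedDeriv p (fun s => E s k) t) (iteratedDeriv p (fun s => E s l) t)
              * U t l j)
        = (∑ k, ∑ l, U t k i
            * (ω (iteratedDeriv p (fun s => E s k) t) (iteratedDeriv p (fun s => E s l) t)
              * U t l j))
          + 2*(p:ℝ) * ∑ k, U t k i * deriv (fun s => U s k j) t := by
      have hterm : ∀ k : Fin r, U t k i * (2*(p:ℝ) * deriv (fun s => U s k j) t
            + ∑ l, ω (iteratedDeriv p (fun s => E s k) t) (iteratedDeriv p (fun s => E s l) t)
                * U t l j)
          = 2*(p:ℝ)*(U t k i * deriv (fun s => U s k j) t)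
            + ∑ l, U t k i
              * (ω (iteratedDeriv p (fun s => E s k) t) (iteratedDeriv p (fun s => E s l) t)
                * U t l j) := by
        intro k
        rw [mul_add, Finset.mul_sum]
        ring
      rw [Finset.sum_congr rfl fun k _ => hterm k, Finset.sum_add_distrib,
        ← Finset.mul_sum, add_comm]
    rw [hR]
    have hX : (∑ k, ∑ l, U t k i * U t l j
          * ω (iteratedDeriv p (fun s => E s k) t) (iteratedDeriv p (fun s => E s l) t))
        = ∑ k, ∑ l, U t k i
            * (ω (iteratedDeriv p (fun s => E s k) t) (iteratedDeriv p (fun s => E s l) t)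
              * U t l j) :=
      Finset.sum_congr rfl fun k _ => Finset.sum_congr rfl fun l _ => by ring
    rw [hX, horth']
    ring
  refine ⟨main, ?_, ?_⟩
  · intro h t
    have hU : U t * (U t)ᵀ = 1 := by
      have h1 := hUorth t
      rw [Matrix.mem_orthogonalGroup_iff] at h1
      simpa [Matrix.star_eq_conjTranspose] using h1
    have hzeroM : (U t)ᵀ *
        ((2 * (p : ℝ)) • (Matrix.of fun a b => deriv (fun s => U s a b) t) +
          (Matrix.of fun a b =>
            ω (iteratedDeriv p (fun s => E s a) t) (iteratedDeriv p (fun s => E s b) t)) *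
            U t) = 0 := by
      ext i j
      rw [← main t i j, h t i j]
      rfl
    calc (2 * (p : ℝ)) • (Matrix.of fun a b => deriv (fun s => U s a b) t) +
          (Matrix.of fun a b =>
            ω (iteratedDeriv p (fun s => E s a) t) (iteratedDeriv p (fun s => E s b) t)) * U t
        = (U t * (U t)ᵀ) * _ := by rw [hU, one_mul]
      _ = U t * ((U t)ᵀ * _) := by rw [Matrix.mul_assoc]
      _ = 0 := by rw [hzeroM, Matrix.mul_zero]
  · intro h t i j
    rw [main t i j, h t]
    simp
end
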